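/- Let d be a positive integer and let A be a real d×d matrix, B, K, ε real d-vectors, and g ≠ 0 a real scalar gain. Define the nominal closed-loop matrix A_C as the real (d+1)×(d+1) block matrix A_C = [[A + B Kᵀ, g·B], [Kᵀ, 1 + g]]. Let Δ_A be a real d×d matrix and Δ_B a real d-vector representing the modelling uncertainty, and define Δ_{A_C} = [[Δ_A + Δ_B Kᵀ, g·Δ_B], [0, 0]]. Assume there exists an invertible complex matrix V such that V⁻¹ A_C V is diagonal (A_C is diagonalizable), that the spectral radius ρ(A_C) < 1, and that ‖V‖·‖V⁻¹‖·‖Δ_{A_C}‖ < 1 − ρ(A_C), where ‖·‖ denotes the operator norm induced by the Euclidean vector norm. Consider the actual closed-loop dynamics ŷ'_{k+1} = (A + Δ_A) ŷ'_k + (B + Δ_B) û_k, w_{k+1} = w_k + û_k, with control offset û_k = Kᵀ(ŷ'_k − ε) + g·w_k. Then for every initial condition (ŷ'_0, w_0), the trajectory converges: ŷ'_k → 0, w_k → (1/g)·Kᵀε, and û_k → 0 as k → ∞. -/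

import Mathlib

open Matrix Filter

/-- The operator norm on square complex matrices induced by the Euclidean vector norm. -/
noncomputable def l2OpNorm {n : Type*} [Fintype n] [DecidableEq n] (M : Matrix n n ℂ) : ℝ :=
  ‖Matrix.toEuclideanCLM (𝕜 := ℂ) M‖

/-- The spectral radius of a square complex matrix: the maximum (supremum) modulus of its
eigenvalues. -/
noncomputable def specRad {n : Type*} [Fintype n] (M : Matrix n n ℂ) : ℝ :=
  sSup {r : ℝ | ∃ μ : ℂ, (∃ v : n → ℂ, v ≠ 0 ∧ M.mulVec v = μ • v) ∧ r = ‖μ‖}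

/-!
In the coordinates `z = (ŷ', w - Kᵀε / g)` the actual closed loop is the linear recursion
`z_{k+1} = (A_C + Δ_{A_C}) z_k`. By the Bauer–Fike theorem every eigenvalue of
`A_C + Δ_{A_C}` lies within `‖V‖ ‖V⁻¹‖ ‖Δ_{A_C}‖` of an eigenvalue of `A_C`, hence strictly
inside the unit disc; by Gelfand's formula the powers of `A_C + Δ_{A_C}` then tend to zero, and
with them `z_k`.
-/

open scoped Matrix.Norms.L2Operator Topology

theorem isUnit_sub_of_norm_inverse_mul_lt_one {R : Type*} [NormedRing R] [CompleteSpace R]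
    {x δ : R} (hx : IsUnit x) (h : ‖Ring.inverse x‖ * ‖δ‖ < 1) : IsUnit (x - δ) := by
  have hsmall : ‖Ring.inverse x * δ‖ < 1 := (norm_mul_le _ _).trans_lt h
  have hfactor : x - δ = x * (1 - Ring.inverse x * δ) := by
    rw [mul_sub, mul_one, ← mul_assoc, Ring.mul_inverse_cancel x hx, one_mul]
  rw [hfactor]
  exact hx.mul (Units.oneSub _ hsmall).isUnit

theorem tendsto_pow_nhds_zero_of_spectralRadius_lt_one {A : Type*} [NormedRing A]
    [NormedAlgebra ℂ A] [CompleteSpace A] {a : A} (h : spectralRadius ℂ a < 1) :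
    Tendsto (a ^ ·) atTop (𝓝 0) := by
  obtain ⟨r, hρr, hr1⟩ := ENNReal.lt_iff_exists_nnreal_btwn.mp h
  have hgelfand := spectrum.pow_nnnorm_pow_one_div_tendsto_nhds_spectralRadius a
  have hle : ∀ᶠ k : ℕ in atTop, ‖a ^ k‖ ≤ (r : ℝ) ^ k := by
    filter_upwards [hgelfand.eventually_lt_const hρr, eventually_gt_atTop 0] with k hk hk0
    rw [one_div, ENNReal.rpow_inv_lt_iff (by positivity), ENNReal.rpow_natCast] at hk
    exact_mod_cast hk.le
  exact squeeze_zero_norm' hle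
    (tendsto_pow_atTop_nhds_zero_of_lt_one r.coe_nonneg (by exact_mod_cast hr1))

namespace Matrix

variable {n : Type*} [Fintype n] [DecidableEq n]

theorem mem_spectrum_iff_exists_mulVec_eq_smul {K : Type*} [Field K] (M : Matrix n n K) (μ : K) :
    μ ∈ spectrum K M ↔ ∃ v : n → K, v ≠ 0 ∧ M *ᵥ v = μ • v := by
  rw [← spectrum_toLin', ← Module.End.hasEigenvalue_iff_mem_spectrum, Module.End.hasEigenvalue_iff,
    Submodule.ne_bot_iff]
  simp [toLin'_apply, and_comm]

theorem spectrum_nonsing_inv_mul_mul {K : Type*} [Field K] (a : Matrix n n K) {V : Matrix n n K}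
    (hV : IsUnit V) : spectrum K (V⁻¹ * a * V) = spectrum K a := by
  simpa [coe_units_inv] using spectrum.units_conjugate' (R := K) (a := a) (u := hV.unit)

theorem diag_mem_spectrum_of_isDiag {K : Type*} [Field K] {a V : Matrix n n K} (hV : IsUnit V)
    (hdiag : (V⁻¹ * a * V).IsDiag) (i : n) : (V⁻¹ * a * V) i i ∈ spectrum K a := by
  rw [← spectrum_nonsing_inv_mul_mul a hV, ← hdiag.diagonal_diag, spectrum_diagonal]
  exact ⟨i, by simp⟩

theorem norm_le_specRad_of_mem_spectrum {M : Matrix n n ℂ} {μ : ℂ} (hμ : μ ∈ spectrum ℂ M) :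
    ‖μ‖ ≤ specRad M := by
  refine le_csSup ⟨‖M‖ * ‖(1 : Matrix n n ℂ)‖, ?_⟩
    ⟨μ, (mem_spectrum_iff_exists_mulVec_eq_smul M μ).mp hμ, rfl⟩
  rintro _ ⟨ν, hν, rfl⟩
  exact spectrum.norm_le_norm_mul_of_mem ((mem_spectrum_iff_exists_mulVec_eq_smul M ν).mpr hν)

theorem tendsto_pow_nhds_zero_of_spectralRadius_map_ofReal_lt_one {M : Matrix n n ℝ}
    (h : spectralRadius ℂ (M.map Complex.ofReal) < 1) : Tendsto (M ^ ·) atTop (𝓝 0) := by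
  have : CompleteSpace (Matrix n n ℂ) := FiniteDimensional.complete ℂ _
  have hre := ((continuous_id.matrix_map Complex.continuous_re).tendsto 0).comp
    (tendsto_pow_nhds_zero_of_spectralRadius_lt_one h)
  convert hre using 2 with k
  · change M ^ k = ((M.map Complex.ofRealHom) ^ k).map Complex.re
    rw [← Matrix.map_pow, Matrix.map_map]
    ext
    simp
  · simp

variable {𝕜 : Type*} [RCLike 𝕜] [Nonempty n]

theorem exists_norm_sub_le_of_mem_spectrum_diagonal_add {e : n → 𝕜} {δ : Matrix n n 𝕜} {μ : 𝕜}
    (hμ : μ ∈ spectrum 𝕜 (diagonal e + δ)) : ∃ i, ‖μ - e i‖ ≤ ‖δ‖ := by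
  obtain ⟨i, hi⟩ := Finite.exists_min fun i => ‖μ - e i‖
  -- By minimality `‖(μ - diagonal e)⁻¹‖ ≤ ‖μ - e i‖⁻¹`, so if `‖δ‖ < ‖μ - e i‖` then
  -- `μ - (diagonal e + δ)` would be a small perturbation of an invertible matrix.
  refine ⟨i, not_lt.mp fun hδ => spectrum.mem_iff.mp hμ ?_⟩
  have hm : 0 < ‖μ - e i‖ := (norm_nonneg δ).trans_lt hδ
  have hne : ∀ j, μ - e j ≠ 0 := fun j => norm_pos_iff.mp (hm.trans_le (hi j))
  have hunit : IsUnit (diagonal fun j => μ - e j) :=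
    isUnit_diagonal.mpr (Pi.isUnit_iff.mpr fun j => (hne j).isUnit)
  have hinv : Ring.inverse (diagonal fun j => μ - e j) = diagonal fun j => (μ - e j)⁻¹ := by
    rw [← nonsing_inv_eq_ringInverse]
    refine inv_eq_left_inv ?_
    rw [diagonal_mul_diagonal, ← diagonal_one]
    exact congrArg diagonal (funext fun j => inv_mul_cancel₀ (hne j))
  have hnorm : ‖Ring.inverse (diagonal fun j => μ - e j)‖ ≤ ‖μ - e i‖⁻¹ := by
    rw [hinv, l2_opNorm_diagonal]
    refine (pi_norm_le_iff_of_nonneg (by positivity)).mpr fun j => ?_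
    rw [norm_inv]
    exact inv_anti₀ hm (hi j)
  have hsplit :
      algebraMap 𝕜 (Matrix n n 𝕜) μ - (diagonal e + δ) = diagonal (fun j => μ - e j) - δ := by
    rw [algebraMap_eq_diagonal, ← sub_sub, ← diagonal_sub]
    rfl
  rw [hsplit]
  refine isUnit_sub_of_norm_inverse_mul_lt_one hunit ?_
  calc _ ≤ ‖μ - e i‖⁻¹ * ‖δ‖ := by gcongr
    _ < 1 := (inv_mul_lt_one₀ hm).mpr hδ

theorem exists_norm_sub_le_of_mem_spectrum_add {a δ V : Matrix n n 𝕜} (hV : IsUnit V)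
    (hdiag : (V⁻¹ * a * V).IsDiag) {μ : 𝕜} (hμ : μ ∈ spectrum 𝕜 (a + δ)) :
    ∃ i, ‖μ - (V⁻¹ * a * V) i i‖ ≤ ‖V‖ * ‖V⁻¹‖ * ‖δ‖ := by
  have hconj : V⁻¹ * (a + δ) * V = diagonal (V⁻¹ * a * V).diag + V⁻¹ * δ * V := by
    rw [hdiag.diagonal_diag, mul_add, add_mul]
  rw [← spectrum_nonsing_inv_mul_mul _ hV, hconj] at hμ
  obtain ⟨i, hi⟩ := exists_norm_sub_le_of_mem_spectrum_diagonal_add hμ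
  refine ⟨i, hi.trans ?_⟩
  calc ‖V⁻¹ * δ * V‖ ≤ ‖V⁻¹‖ * ‖δ‖ * ‖V‖ := norm_mul₃_le
    _ = ‖V‖ * ‖V⁻¹‖ * ‖δ‖ := by ring

theorem spectralRadius_add_lt_one {a δ V : Matrix n n ℂ} (hV : IsUnit V)
    (hdiag : (V⁻¹ * a * V).IsDiag) (hδ : ‖V‖ * ‖V⁻¹‖ * ‖δ‖ < 1 - specRad a) :
    spectralRadius ℂ (a + δ) < 1 := by
  have : CompleteSpace (Matrix n n ℂ) := FiniteDimensional.complete ℂ _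
  rw [← ENNReal.coe_one]
  refine spectrum.spectralRadius_lt_of_forall_lt_of_nonempty (spectrum.nonempty _) fun μ hμ => ?_
  obtain ⟨i, hi⟩ := exists_norm_sub_le_of_mem_spectrum_add hV hdiag hμ
  have hspec := norm_le_specRad_of_mem_spectrum (diag_mem_spectrum_of_isDiag hV hdiag i)
  rw [← NNReal.coe_lt_coe, coe_nnnorm, NNReal.coe_one]
  linarith [norm_le_norm_add_norm_sub' μ ((V⁻¹ * a * V) i i)]

end Matrix

theorem washout_closedLoop_mulVec {m : Type*} [Fintype m] (A ΔA : Matrix m m ℝ)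
    (B ΔB K ε y : m → ℝ) (g w c u : ℝ) (hc : g * c = K ⬝ᵥ ε)
    (hu : u = K ⬝ᵥ (y - ε) + g * w) :
    (fromBlocks (A + of fun i j => B i * K j) (of fun i (_ : Fin 1) => g * B i)
        (of fun (_ : Fin 1) j => K j) (of fun (_ _ : Fin 1) => 1 + g) +
      fromBlocks (ΔA + of fun i j => ΔB i * K j) (of fun i (_ : Fin 1) => g * ΔB i) 0 0) *ᵥ
        Sum.elim y (fun _ => w - c) =
      Sum.elim ((A + ΔA) *ᵥ y + u • (B + ΔB)) (fun _ => w + u - c) := by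
  have hu' : u = K ⬝ᵥ y + g * (w - c) := by rw [hu, dotProduct_sub, ← hc]; ring
  rw [fromBlocks_add, fromBlocks_mulVec]
  congr 1 <;> ext i
  · simp only [Sum.elim_comp_inl, of_add_of, Sum.elim_comp_inr, Pi.add_apply, mulVec, dotProduct,
      Matrix.add_apply, of_apply, add_mul, Finset.sum_add_distrib, Finset.univ_unique,
      Fin.default_eq_zero, Fin.isValue, Finset.sum_const, Finset.card_singleton, smul_add,
      one_smul, hu', Pi.smul_apply, smul_eq_mul, Finset.sum_mul]
    ring_nf
  · simp only [add_zero, Sum.elim_comp_inl, Sum.elim_comp_inr, Pi.add_apply, mulVec, dotProduct,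
      of_apply, Finset.univ_unique, Fin.default_eq_zero, Fin.isValue, Finset.sum_const,
      Finset.card_singleton, one_smul, hu']
    ring

theorem stmt0_general (d : ℕ)
    (A : Matrix (Fin d) (Fin d) ℝ) (B K ε : Fin d → ℝ) (g : ℝ) (hg : g ≠ 0)
    -- the nominal closed-loop matrix A_C
    (AC : Matrix (Fin d ⊕ Fin 1) (Fin d ⊕ Fin 1) ℝ)
    (hAC : AC = Matrix.fromBlocks
      (A + Matrix.of fun i j => B i * K j)
      (Matrix.of fun i (_ : Fin 1) => g * B i)
      (Matrix.of fun (_ : Fin 1) j => K j)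
      (Matrix.of fun (_ _ : Fin 1) => 1 + g))
    -- the modelling uncertainty
    (ΔA : Matrix (Fin d) (Fin d) ℝ) (ΔB : Fin d → ℝ)
    (ΔAC : Matrix (Fin d ⊕ Fin 1) (Fin d ⊕ Fin 1) ℝ)
    (hΔAC : ΔAC = Matrix.fromBlocks
      (ΔA + Matrix.of fun i j => ΔB i * K j)
      (Matrix.of fun i (_ : Fin 1) => g * ΔB i)
      (0 : Matrix (Fin 1) (Fin d) ℝ)
      (0 : Matrix (Fin 1) (Fin 1) ℝ))
    -- A_C is diagonalizable via the invertible complex matrix V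
    (V : Matrix (Fin d ⊕ Fin 1) (Fin d ⊕ Fin 1) ℂ) (hV : IsUnit V)
    (hdiag : (V⁻¹ * AC.map Complex.ofReal * V).IsDiag)
    -- Bauer–Fike smallness condition on the uncertainty
    (hbound : l2OpNorm V * l2OpNorm V⁻¹ * l2OpNorm (ΔAC.map Complex.ofReal)
      < 1 - specRad (AC.map Complex.ofReal))
    -- the actual closed-loop dynamics
    (y' : ℕ → Fin d → ℝ) (w : ℕ → ℝ) (u : ℕ → ℝ)
    (hu : ∀ k, u k = K ⬝ᵥ (y' k - ε) + g * w k)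
    (hy : ∀ k, y' (k + 1) = (A + ΔA).mulVec (y' k) + u k • (B + ΔB))
    (hw : ∀ k, w (k + 1) = w k + u k) :
    Tendsto y' atTop (nhds 0) ∧
    Tendsto w atTop (nhds ((1 / g) * (K ⬝ᵥ ε))) ∧
    Tendsto u atTop (nhds 0) := by
  set c := 1 / g * (K ⬝ᵥ ε)
  have hc : g * c = K ⬝ᵥ ε := by rw [← mul_assoc, mul_one_div_cancel hg, one_mul]
  set z : ℕ → Fin d ⊕ Fin 1 → ℝ := fun k => Sum.elim (y' k) fun _ => w k - c
  have hz : ∀ k, z k = (AC + ΔAC) ^ k *ᵥ z 0 := by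
    intro k
    induction k with
    | zero => rw [pow_zero, one_mulVec]
    | succ k ih =>
      rw [pow_succ', ← mulVec_mulVec, ← ih]
      simp only [z]
      rw [hAC, hΔAC,
        washout_closedLoop_mulVec A ΔA B ΔB K ε (y' k) g (w k) c (u k) hc (hu k), hy, hw]
  have hpow : Tendsto ((AC + ΔAC) ^ ·) atTop (𝓝 0) := by
    refine Matrix.tendsto_pow_nhds_zero_of_spectralRadius_map_ofReal_lt_one ?_
    rw [Matrix.map_add _ Complex.ofReal_add]
    exact Matrix.spectralRadius_add_lt_one hV hdiag hbound
  have hzlim : Tendsto z atTop (𝓝 0) :=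
    (tendsto_congr hz).mpr <|
      ((continuous_id.matrix_mulVec continuous_const).tendsto' 0 0 (zero_mulVec _)).comp hpow
  have hylim : Tendsto y' atTop (𝓝 0) :=
    ((continuous_pi fun i => continuous_apply (Sum.inl i)).tendsto' 0 0 rfl).comp hzlim
  have hwlim : Tendsto (fun k => w k - c) atTop (𝓝 0) :=
    ((continuous_apply (Sum.inr 0)).tendsto' 0 0 rfl).comp hzlim
  refine ⟨hylim, by simpa using hwlim.add_const c, ?_⟩
  have hu' : u = fun k => K ⬝ᵥ y' k + g * (w k - c) := by
    funext k
    rw [hu, dotProduct_sub, ← hc]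
    ring
  simpa [hu'] using (((continuous_const.dotProduct continuous_id).tendsto 0).comp hylim).add
    (hwlim.const_mul g)

theorem stmt0 (d : ℕ) (hd : 0 < d)
    (A : Matrix (Fin d) (Fin d) ℝ) (B K ε : Fin d → ℝ) (g : ℝ) (hg : g ≠ 0)
    -- the nominal closed-loop matrix A_C
    (AC : Matrix (Fin d ⊕ Fin 1) (Fin d ⊕ Fin 1) ℝ)
    (hAC : AC = Matrix.fromBlocks
      (A + Matrix.of fun i j => B i * K j)
      (Matrix.of fun i (_ : Fin 1) => g * B i)
      (Matrix.of fun (_ : Fin 1) j => K j)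
      (Matrix.of fun (_ _ : Fin 1) => 1 + g))
    -- the modelling uncertainty
    (ΔA : Matrix (Fin d) (Fin d) ℝ) (ΔB : Fin d → ℝ)
    (ΔAC : Matrix (Fin d ⊕ Fin 1) (Fin d ⊕ Fin 1) ℝ)
    (hΔAC : ΔAC = Matrix.fromBlocks
      (ΔA + Matrix.of fun i j => ΔB i * K j)
      (Matrix.of fun i (_ : Fin 1) => g * ΔB i)
      (0 : Matrix (Fin 1) (Fin d) ℝ)
      (0 : Matrix (Fin 1) (Fin 1) ℝ))
    -- A_C is diagonalizable via the invertible complex matrix V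
    (V : Matrix (Fin d ⊕ Fin 1) (Fin d ⊕ Fin 1) ℂ) (hV : IsUnit V)
    (hdiag : (V⁻¹ * AC.map Complex.ofReal * V).IsDiag)
    -- spectral radius of A_C strictly less than 1
    (hρ : specRad (AC.map Complex.ofReal) < 1)
    -- Bauer–Fike smallness condition on the uncertainty
    (hbound : l2OpNorm V * l2OpNorm V⁻¹ * l2OpNorm (ΔAC.map Complex.ofReal)
      < 1 - specRad (AC.map Complex.ofReal))
    -- the actual closed-loop dynamics
    (y' : ℕ → Fin d → ℝ) (w : ℕ → ℝ) (u : ℕ → ℝ)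
    (hu : ∀ k, u k = K ⬝ᵥ (y' k - ε) + g * w k)
    (hy : ∀ k, y' (k + 1) = (A + ΔA).mulVec (y' k) + u k • (B + ΔB))
    (hw : ∀ k, w (k + 1) = w k + u k) :
    Tendsto y' atTop (nhds 0) ∧
    Tendsto w atTop (nhds ((1 / g) * (K ⬝ᵥ ε))) ∧
    Tendsto u atTop (nhds 0) :=
  stmt0_general d A B K ε g hg AC hAC ΔA ΔB ΔAC hΔAC V hV hdiag hbound y' w u hu hy hw
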